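/- arXiv:2501.10480 — 2 statements merged into one kernel-verified Lean document; each statement's English description precedes it below -/
import Mathlib

section
/- Let R be an integral domain equipped with an absolute value v : AbsoluteValue R ℝ that is nonarchimedean, i.e., v(x + y) ≤ max(v(x), v(y)) for all x, y ∈ R, and define the Gauss norm of a polynomial p ∈ R[X] by ‖p‖ = (sup over i in the support of p of v(coeff i of p)), with ‖0‖ = 0. Then the Gauss norm is multiplicative: ‖p · q‖ = ‖p‖ · ‖q‖ for all p, q ∈ R[X]. -/
open Polynomial

/-- The Gauss norm of a polynomial: the sup of the absolute values of its coefficients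
over its support, with the zero polynomial getting norm `0`. -/
noncomputable def gaussNorm {R : Type*} [CommRing R] (v : AbsoluteValue R ℝ)
    (p : Polynomial R) : ℝ :=
  if h : p.support.Nonempty then p.support.sup' h (fun i => v (p.coeff i)) else 0

theorem gaussNorm_eq_polynomial_gaussNorm_one {R : Type*} [CommRing R] (v : AbsoluteValue R ℝ)
    (p : R[X]) : gaussNorm v p = p.gaussNorm v 1 := by
  simp only [_root_.gaussNorm, Polynomial.gaussNorm, one_pow, mul_one]

/-- Gauss's lemma: over an integral domain, the Gauss norm of a nonarchimedean
absolute value is multiplicative. -/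
theorem gaussNorm_mul {R : Type*} [CommRing R]
    (v : AbsoluteValue R ℝ) (hv : ∀ x y : R, v (x + y) ≤ max (v x) (v y))
    (p q : Polynomial R) :
    gaussNorm v (p * q) = gaussNorm v p * gaussNorm v q := by
  simp only [gaussNorm_eq_polynomial_gaussNorm_one]
  exact Polynomial.gaussNorm_mul hv one_pos p q
end

section
/- There do not exist real numbers c, r₁, r₂ such that, as polynomials in ℝ[X], 2X³ − C(π²)·X + C(π/2) = C c · (X − C r₁) · (X − C r₂)². -/
open Polynomial Real

/-- The cubic `2x³ − π²x + π/2` is not of the form `c(x − r₁)(x − r₂)²`: it has no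
repeated real root. -/
theorem cubic_no_repeated_root :
    ¬ ∃ c r₁ r₂ : ℝ,
      (2 * X ^ 3 - C (π ^ 2) * X + C (π / 2) : Polynomial ℝ) =
        C c * (X - C r₁) * (X - C r₂) ^ 2 := by
  rintro ⟨c, r₁, r₂, h⟩
  have h' : (C 2 * X ^ 3 + C 0 * X ^ 2 + C (-(π ^ 2)) * X + C (π / 2) : Polynomial ℝ) =
      C c * X ^ 3 + C (-(c * (r₁ + 2 * r₂))) * X ^ 2 +
        C (c * (2 * r₁ * r₂ + r₂ ^ 2)) * X + C (-(c * (r₁ * r₂ ^ 2))) := by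
    have : (C 2 * X ^ 3 + C 0 * X ^ 2 + C (-(π ^ 2)) * X + C (π / 2) : Polynomial ℝ) =
        2 * X ^ 3 - C (π ^ 2) * X + C (π / 2) := by
      simp only [map_neg, map_ofNat, map_zero]
      ring
    rw [this, h]
    simp only [map_neg, map_mul, map_add, map_pow, map_ofNat]
    ring
  have key : ∀ k, ((C 2 * X ^ 3 + C 0 * X ^ 2 + C (-(π ^ 2)) * X + C (π / 2) :
        Polynomial ℝ)).coeff k
      = (C c * X ^ 3 + C (-(c * (r₁ + 2 * r₂))) * X ^ 2 +
        C (c * (2 * r₁ * r₂ + r₂ ^ 2)) * X + C (-(c * (r₁ * r₂ ^ 2)))).coeff k :=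
    fun k => by rw [h']
  have e3 := key 3
  have e2 := key 2
  have e1 := key 1
  have e0 := key 0
  simp only [coeff_add, coeff_C_mul, coeff_X_pow, coeff_C, coeff_mul_X, coeff_X,
    if_true, if_false, mul_one, mul_zero, add_zero, zero_add] at e3 e2 e1 e0
  norm_num at e3 e2 e1 e0
  subst e3
  rcases e2 with e2 | e2
  · norm_num at e2
  have hr : r₁ = -2 * r₂ := by linarith
  subst hr
  have hq : r₂ ^ 2 = π ^ 2 / 6 := by nlinarith [e1]
  have hc : r₂ ^ 3 = π / 8 := by nlinarith [e0]
  have e6 : (r₂ ^ 2) ^ 3 = (r₂ ^ 3) ^ 2 := by ring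
  rw [hq, hc] at e6
  have hpi := Real.pi_gt_three
  nlinarith [e6, hpi, sq_nonneg π, sq_nonneg (π ^ 2 - 9), Real.pi_pos]
end
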